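/- Let n = 2m with m ≥ 1 an integer, d = 3, and let σ ∈ {E,O}^3 be such that not all three coordinates of σ are equal (e.g. σ = (E,E,O), (E,O,E) or (O,E,E)). Then the node set X^σ = (C_n^{σ_1} × C_n^{σ_2} × C_n^{σ_3}) ∪ (C_n^{σ̃_1} × C_n^{σ̃_2} × C_n^{σ̃_3}) has cardinality ((n+1)^3 − (n+1))/4 = m(m+1)(2m+1). -/

import Mathlib

open Real

/-! Since `k ↦ cos (kπ/n)` is injective on `{0, …, n}`, the sets `C_n^E` and `C_n^O` are disjoint,
with `m + 1` and `m` elements. For mixed `σ` the two products are therefore disjoint, of sizes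
`a²b` and `ab²` with `{a, b} = {m + 1, m}`, and `ab(a + b) = m(m+1)(2m+1)`. -/

/-- The even-index Chebyshev–Lobatto points `C_n^E = {cos(kπ/n) : 0 ≤ k ≤ n, k even}`. -/
noncomputable def chebE (n : ℕ) : Finset ℝ :=
  ((Finset.range (n + 1)).filter (fun k => Even k)).image
    (fun k : ℕ => Real.cos ((k : ℝ) * π / n))

/-- The odd-index Chebyshev–Lobatto points `C_n^O = {cos(kπ/n) : 0 ≤ k ≤ n, k odd}`. -/
noncomputable def chebO (n : ℕ) : Finset ℝ :=
  ((Finset.range (n + 1)).filter (fun k => Odd k)).image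
    (fun k : ℕ => Real.cos ((k : ℝ) * π / n))

/-- `C_n^{σᵢ}` for `σᵢ ∈ {E, O}` encoded as a `Bool` (`true = E`, `false = O`). -/
noncomputable def chebSub (n : ℕ) (b : Bool) : Finset ℝ :=
  if b then chebE n else chebO n

lemma injOn_cos_mul_pi_div (n : ℕ) :
    Set.InjOn (fun k : ℕ => Real.cos ((k : ℝ) * π / n)) (Set.Iic n) := by
  rcases Nat.eq_zero_or_pos n with rfl | hn
  · intro a ha b hb _
    simp_all
  intro a ha b hb hab
  have hn' : (0 : ℝ) < n := by exact_mod_cast hn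
  have mem_Icc : ∀ k ∈ Set.Iic n, (k : ℝ) * π / n ∈ Set.Icc 0 π := fun k hk => by
    have hk' : (k : ℝ) ≤ n := by exact_mod_cast hk
    refine ⟨by positivity, ?_⟩
    rw [div_le_iff₀ hn']
    nlinarith [pi_pos]
  have h := Real.injOn_cos (mem_Icc a ha) (mem_Icc b hb) hab
  field_simp at h
  exact_mod_cast h

lemma card_chebE (m : ℕ) : (chebE (2 * m)).card = m + 1 := by
  have evens : (Finset.range (2 * m + 1)).filter Even = (Finset.range (m + 1)).image (2 * ·) := by
    ext k
    simp only [Finset.mem_filter, Finset.mem_range, Finset.mem_image, Nat.even_iff]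
    constructor
    · rintro ⟨hk, hk2⟩
      exact ⟨k / 2, by omega, by omega⟩
    · rintro ⟨j, hj, rfl⟩
      omega
  rw [chebE, Finset.card_image_of_injOn, evens,
    Finset.card_image_of_injective _ (fun a b h => by simpa using h), Finset.card_range]
  exact (injOn_cos_mul_pi_div _).mono fun k hk => by
    simp only [Finset.coe_filter, Finset.mem_range] at hk
    exact Nat.lt_succ_iff.mp hk.1

lemma card_chebO (m : ℕ) : (chebO (2 * m)).card = m := by
  have odds : (Finset.range (2 * m + 1)).filter Odd = (Finset.range m).image (2 * · + 1) := by
    ext k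
    simp only [Finset.mem_filter, Finset.mem_range, Finset.mem_image, Nat.odd_iff]
    constructor
    · rintro ⟨hk, hk2⟩
      exact ⟨k / 2, by omega, by omega⟩
    · rintro ⟨j, hj, rfl⟩
      omega
  rw [chebO, Finset.card_image_of_injOn, odds,
    Finset.card_image_of_injective _ (fun a b h => by simpa using h), Finset.card_range]
  exact (injOn_cos_mul_pi_div _).mono fun k hk => by
    simp only [Finset.coe_filter, Finset.mem_range] at hk
    exact Nat.lt_succ_iff.mp hk.1

lemma card_chebSub (m : ℕ) (b : Bool) :
    (chebSub (2 * m) b).card = if b then m + 1 else m := by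
  cases b <;> simp [chebSub, card_chebE, card_chebO]

lemma disjoint_chebE_chebO (n : ℕ) : Disjoint (chebE n) (chebO n) := by
  simp only [chebE, chebO, Finset.disjoint_left, Finset.mem_image, Finset.mem_filter,
    Finset.mem_range, not_exists, not_and]
  rintro x ⟨a, ⟨ha, ha2⟩, rfl⟩ b ⟨hb, hb2⟩ hab
  have hba : b = a :=
    injOn_cos_mul_pi_div n (Nat.lt_succ_iff.mp hb) (Nat.lt_succ_iff.mp ha) hab
  exact Nat.not_odd_iff_even.mpr ha2 (hba ▸ hb2)

lemma disjoint_chebSub_not (n : ℕ) (b : Bool) : Disjoint (chebSub n b) (chebSub n (!b)) := by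
  cases b
  · exact (disjoint_chebE_chebO n).symm
  · exact disjoint_chebE_chebO n

lemma mul_mul_add_not_mul_not_mul_not {R : Type*} [CommSemiring R] (c : Bool → R)
    (σ₁ σ₂ σ₃ : Bool) (hσ : ¬ (σ₁ = σ₂ ∧ σ₂ = σ₃)) :
    c σ₁ * c σ₂ * c σ₃ + c (!σ₁) * c (!σ₂) * c (!σ₃) =
      c true * c false * (c true + c false) := by
  cases σ₁ <;> cases σ₂ <;> cases σ₃ <;>
    first | exact absurd ⟨rfl, rfl⟩ hσ | (simp only [Bool.not_true, Bool.not_false]; ring)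

lemma sub_div_four_eq (m : ℕ) :
    ((2 * m + 1) ^ 3 - (2 * m + 1)) / 4 = m * (m + 1) * (2 * m + 1) := by
  have h : (2 * m + 1) ^ 3 = (2 * m + 1) + 4 * (m * (m + 1) * (2 * m + 1)) := by ring
  omega

theorem card_nodes_mixed (m : ℕ) (n : ℕ) (hn : n = 2 * m)
    (σ₁ σ₂ σ₃ : Bool) (hσ : ¬ (σ₁ = σ₂ ∧ σ₂ = σ₃)) :
    ((chebSub n σ₁ ×ˢ (chebSub n σ₂ ×ˢ chebSub n σ₃)) ∪
        (chebSub n (!σ₁) ×ˢ (chebSub n (!σ₂) ×ˢ chebSub n (!σ₃)))).card =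
      ((n + 1) ^ 3 - (n + 1)) / 4 ∧
    ((n + 1) ^ 3 - (n + 1)) / 4 = m * (m + 1) * (2 * m + 1) := by
  subst hn
  have disjoint : Disjoint (chebSub (2 * m) σ₁ ×ˢ (chebSub (2 * m) σ₂ ×ˢ chebSub (2 * m) σ₃))
      (chebSub (2 * m) (!σ₁) ×ˢ (chebSub (2 * m) (!σ₂) ×ˢ chebSub (2 * m) (!σ₃))) :=
    Finset.disjoint_product.mpr (Or.inl (disjoint_chebSub_not _ σ₁))
  refine ⟨?_, sub_div_four_eq m⟩
  rw [Finset.card_union_of_disjoint disjoint]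
  simp only [Finset.card_product, ← mul_assoc]
  rw [mul_mul_add_not_mul_not_mul_not (fun b => (chebSub (2 * m) b).card) σ₁ σ₂ σ₃ hσ,
    card_chebSub, card_chebSub, sub_div_four_eq]
  simp only [if_true, Bool.false_eq_true, if_false]
  ring
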